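/- Let L be a locally compact Hausdorff space, Y a uniformly monotone Banach lattice with modulus δ, 0 < η < 1, f₀ ∈ C₀(L) with ‖f₀‖_∞ = 1, and S : C₀(L) → Y a positive bounded linear operator with ‖S‖ = 1 and ‖S(f₀)‖ > 1/(1 + δ(η²)). Let A₁ = {t : f₀(t) < −1 + η/2} and B₁ = {t : f₀(t) > 1 − η/2}. Then for every h in the closed unit ball of C₀(L) vanishing on A₁ ∪ B₁, one has ‖S(h)‖ ≤ 2η. -/

import Mathlib

open scoped ZeroAtInfty

/-!
Put `u = |f₀| + (η/2)|h|`. Off `A₁ ∪ B₁` we have `|f₀| ≤ 1 - η/2`, and on it `h = 0`, so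
`‖u‖ ≤ 1`. With `x = S|f₀|` and `y = S((η/2)|h|)` this gives `‖x + y‖ ≤ 1`, while positivity
of `S` gives `‖x‖ ≥ ‖S f₀‖ > 1/(1 + δ(η²))`. After rescaling `x` to norm one, uniform
monotonicity yields `‖y‖ ≤ η²`, i.e. `‖S|h|‖ ≤ 2η`; finally `|S h| ≤ S|h|` and the norm of `Y`
is solid.
-/

namespace ZeroAtInftyContinuousMap

variable {L : Type*} [TopologicalSpace L]

theorem norm_coe_le_norm {β : Type*} [SeminormedAddCommGroup β] (f : C₀(L, β)) (t : L) :
    ‖f t‖ ≤ ‖f‖ := by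
  rw [← norm_toBCF_eq_norm]
  exact f.toBCF.norm_coe_le_norm t

theorem norm_le {β : Type*} [SeminormedAddCommGroup β] {f : C₀(L, β)} {C : ℝ} (hC : 0 ≤ C) :
    ‖f‖ ≤ C ↔ ∀ t, ‖f t‖ ≤ C := by
  rw [← norm_toBCF_eq_norm]
  exact BoundedContinuousFunction.norm_le hC

noncomputable def abs (f : C₀(L, ℝ)) : C₀(L, ℝ) :=
  ⟨⟨fun t => |f t|, f.continuous.abs⟩, by simpa using f.zero_at_infty'.abs⟩

@[simp]
theorem abs_apply (f : C₀(L, ℝ)) (t : L) : f.abs t = |f t| := rfl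

theorem abs_apply_nonneg (f : C₀(L, ℝ)) (t : L) : 0 ≤ f.abs t := abs_nonneg (f t)

@[simp]
theorem norm_abs (f : C₀(L, ℝ)) : ‖f.abs‖ = ‖f‖ := by
  refine le_antisymm ((norm_le (norm_nonneg f)).2 fun t => ?_)
    ((norm_le (norm_nonneg _)).2 fun t => ?_)
  · simpa using norm_coe_le_norm f t
  · simpa using norm_coe_le_norm f.abs t

end ZeroAtInftyContinuousMap

section PositiveOperator

variable {L : Type*} [TopologicalSpace L] {Y : Type*} [NormedAddCommGroup Y] [Lattice Y]
  [IsOrderedAddMonoid Y] {F : Type*} [FunLike F C₀(L, ℝ) Y] [AddMonoidHomClass F C₀(L, ℝ) Y]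

theorem abs_apply_le_apply_abs {S : F} (hS : ∀ f : C₀(L, ℝ), (∀ t, 0 ≤ f t) → 0 ≤ S f)
    (f : C₀(L, ℝ)) : |S f| ≤ S f.abs := by
  refine abs_le'.2 ⟨?_, ?_⟩
  · have := hS (f.abs - f) fun t => by simpa using le_abs_self (f t)
    rwa [map_sub, sub_nonneg] at this
  · have := hS (f.abs + f) fun t => by simpa using neg_le_iff_add_nonneg'.1 (neg_abs_le (f t))
    rwa [map_add, ← sub_neg_eq_add, sub_nonneg] at this

theorem norm_apply_le_norm_apply_abs [HasSolidNorm Y] {S : F}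
    (hS : ∀ f : C₀(L, ℝ), (∀ t, 0 ≤ f t) → 0 ≤ S f) (f : C₀(L, ℝ)) :
    ‖S f‖ ≤ ‖S f.abs‖ :=
  norm_le_norm_of_abs_le_abs <| (abs_apply_le_apply_abs hS f).trans_eq
    (abs_of_nonneg (hS _ f.abs_apply_nonneg)).symm

end PositiveOperator

-- `Y` carries no ordered-module structure, so the rescaled vectors are assumed nonnegative.
theorem norm_le_of_norm_add_le_one {Y : Type*} [NormedAddCommGroup Y] [NormedSpace ℝ Y]
    [Preorder Y] {d e : ℝ} (hd : 0 ≤ d)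
    (hmod : ∀ x y : Y, 0 ≤ x → 0 ≤ y → ‖x‖ = 1 → ‖x + y‖ ≤ 1 + d → ‖y‖ ≤ e)
    {x y : Y} (hx : 0 ≤ ‖x‖⁻¹ • x) (hy : 0 ≤ ‖x‖⁻¹ • y) (hx_gt : 1 / (1 + d) < ‖x‖)
    (hx_le : ‖x‖ ≤ 1) (hxy : ‖x + y‖ ≤ 1) : ‖y‖ ≤ e := by
  have hx_pos : 0 < ‖x‖ := lt_of_le_of_lt (by positivity) hx_gt
  have hinv : ‖x‖⁻¹ ≤ 1 + d := by
    rw [one_div, inv_lt_comm₀ (by positivity) hx_pos] at hx_gt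
    exact hx_gt.le
  have hscaled : ‖‖x‖⁻¹ • y‖ ≤ e := by
    refine hmod _ _ hx hy ?_ ?_
    · rw [norm_smul, norm_inv, norm_norm, inv_mul_cancel₀ hx_pos.ne']
    · rw [← smul_add, norm_smul, norm_inv, norm_norm]
      calc ‖x‖⁻¹ * ‖x + y‖ ≤ ‖x‖⁻¹ * 1 := by gcongr
        _ ≤ 1 + d := by rwa [mul_one]
  calc ‖y‖ = ‖x‖ * ‖‖x‖⁻¹ • y‖ := by
        rw [norm_smul, norm_inv, norm_norm, mul_inv_cancel_left₀ hx_pos.ne']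
    _ ≤ 1 * e := by gcongr
    _ = e := one_mul e

theorem norm_abs_add_smul_abs_le_one {L : Type*} [TopologicalSpace L] {f₀ h : C₀(L, ℝ)} {η : ℝ}
    (hη : 0 ≤ η) (hf₀ : ‖f₀‖ ≤ 1) (hh : ‖h‖ ≤ 1)
    (hzero : ∀ t, (f₀ t < -1 + η / 2 ∨ 1 - η / 2 < f₀ t) → h t = 0) :
    ‖f₀.abs + (η / 2) • h.abs‖ ≤ 1 := by
  refine (ZeroAtInftyContinuousMap.norm_le zero_le_one).2 fun t => ?_
  have hf₀t : |f₀ t| ≤ 1 := (f₀.norm_coe_le_norm t).trans hf₀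
  have hht : |h t| ≤ 1 := (h.norm_coe_le_norm t).trans hh
  have hsum_nonneg : 0 ≤ |f₀ t| + η / 2 * |h t| := by positivity
  simp only [ZeroAtInftyContinuousMap.add_apply, ZeroAtInftyContinuousMap.smul_apply,
    ZeroAtInftyContinuousMap.abs_apply, smul_eq_mul, Real.norm_eq_abs, abs_of_nonneg hsum_nonneg]
  by_cases hA : f₀ t < -1 + η / 2 ∨ 1 - η / 2 < f₀ t
  · simpa [hzero t hA] using hf₀t
  · rw [not_or, not_lt, not_lt] at hA
    have : |f₀ t| ≤ 1 - η / 2 := abs_le.2 ⟨by linarith [hA.1], hA.2⟩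
    nlinarith

theorem stmt_8_general {L : Type*} [TopologicalSpace L]
    {Y : Type*} [NormedAddCommGroup Y] [Lattice Y] [HasSolidNorm Y]
    [IsOrderedAddMonoid Y] [NormedSpace ℝ Y]
    (δ : ℝ → ℝ)
    (hδ : ∀ e : ℝ, 0 < e → e < 1 → 0 < δ e ∧ δ e ≤ e ∧
      ∀ x y : Y, 0 ≤ x → 0 ≤ y → ‖x‖ = 1 → ‖x + y‖ ≤ 1 + δ e → ‖y‖ ≤ e)
    (η : ℝ) (hη0 : 0 < η) (hη1 : η < 1)
    (f₀ : C₀(L, ℝ)) (hf₀ : ‖f₀‖ = 1)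
    (S : C₀(L, ℝ) →L[ℝ] Y) (hSnorm : ‖S‖ = 1)
    (hSpos : ∀ f : C₀(L, ℝ), (∀ t, 0 ≤ f t) → 0 ≤ S f)
    (hSf₀ : ‖S f₀‖ > 1 / (1 + δ (η ^ 2))) :
    ∀ h : C₀(L, ℝ), ‖h‖ ≤ 1 →
      (∀ t, (f₀ t < -1 + η / 2 ∨ 1 - η / 2 < f₀ t) → h t = 0) →
      ‖S h‖ ≤ 2 * η := by
  intro h hh hzero
  obtain ⟨hδ_pos, -, hmod⟩ := hδ (η ^ 2) (by positivity) (by nlinarith)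
  have smul_S_nonneg : ∀ c : ℝ, 0 ≤ c → ∀ f : C₀(L, ℝ), (∀ t, 0 ≤ f t) → 0 ≤ c • S f :=
    fun c hc f hf => map_smul S c f ▸ hSpos _ fun t => mul_nonneg hc (hf t)
  have hS_le : ∀ f, ‖S f‖ ≤ ‖f‖ := fun f => by simpa [hSnorm] using S.le_opNorm f
  have hsum : ‖S f₀.abs + S ((η / 2) • h.abs)‖ ≤ 1 := by
    rw [← map_add]
    exact (hS_le _).trans (norm_abs_add_smul_abs_le_one hη0.le hf₀.le hh hzero)
  have hy : ‖S ((η / 2) • h.abs)‖ ≤ η ^ 2 :=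
    norm_le_of_norm_add_le_one hδ_pos.le hmod
      (smul_S_nonneg _ (by positivity) _ f₀.abs_apply_nonneg)
      (by rw [map_smul, smul_smul]
          exact smul_S_nonneg _ (by positivity) _ h.abs_apply_nonneg)
      (hSf₀.trans_le (norm_apply_le_norm_apply_abs hSpos f₀))
      ((hS_le _).trans (f₀.norm_abs.trans hf₀).le) hsum
  rw [map_smul, norm_smul, Real.norm_of_nonneg (by positivity)] at hy
  calc ‖S h‖ ≤ ‖S h.abs‖ := norm_apply_le_norm_apply_abs hSpos h
    _ ≤ 2 * η := by nlinarith

/-- If `Y` is uniformly monotone with modulus `δ`, `S : C₀(L) → Y` is positive of norm one,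
`‖f₀‖ = 1` and `‖S f₀‖ > 1/(1 + δ(η²))`, then `‖S h‖ ≤ 2η` for every `h` in the unit ball
vanishing on `A₁ ∪ B₁ = {f₀ < -1 + η/2} ∪ {f₀ > 1 - η/2}`. -/
theorem stmt_8 {L : Type*} [TopologicalSpace L] [LocallyCompactSpace L] [T2Space L]
    {Y : Type*} [NormedAddCommGroup Y] [Lattice Y] [HasSolidNorm Y]
    [IsOrderedAddMonoid Y] [NormedSpace ℝ Y] [CompleteSpace Y]
    (δ : ℝ → ℝ)
    (hδ : ∀ e : ℝ, 0 < e → e < 1 → 0 < δ e ∧ δ e ≤ e ∧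
      ∀ x y : Y, 0 ≤ x → 0 ≤ y → ‖x‖ = 1 → ‖x + y‖ ≤ 1 + δ e → ‖y‖ ≤ e)
    (η : ℝ) (hη0 : 0 < η) (hη1 : η < 1)
    (f₀ : C₀(L, ℝ)) (hf₀ : ‖f₀‖ = 1)
    (S : C₀(L, ℝ) →L[ℝ] Y) (hSnorm : ‖S‖ = 1)
    (hSpos : ∀ f : C₀(L, ℝ), (∀ t, 0 ≤ f t) → 0 ≤ S f)
    (hSf₀ : ‖S f₀‖ > 1 / (1 + δ (η ^ 2))) :
    ∀ h : C₀(L, ℝ), ‖h‖ ≤ 1 →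
      (∀ t, (f₀ t < -1 + η / 2 ∨ 1 - η / 2 < f₀ t) → h t = 0) →
      ‖S h‖ ≤ 2 * η :=
  stmt_8_general δ hδ η hη0 hη1 f₀ hf₀ S hSnorm hSpos hSf₀
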